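/- arXiv:2312.05226 — 2 statements merged into one kernel-verified Lean document; each statement's English description precedes it below -/
import Mathlib

section
/- Let m be a positive odd integer, let A ∈ ℝ satisfy A^m = −1/m, and let c ∈ ℝ. Define u : {t ∈ ℝ : t > 0} × ℝ → ℝ by u(t, x) = A·(x + c)·t^{−1/m}. Then u satisfies the nonlinear PDE ∂u/∂t = u·(∂u/∂x)^m at every point (t, x) with t > 0. -/
/-!
The ansatz `u = A (x + c) t^p` with `p = -1/m` separates variables: `∂ₜu = p u / t` and
`∂ₓu = A t^p`, so the PDE reduces to `(A t^p)^m = p / t`, i.e. `A^m t^(p m) = -1/(m t)`,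
which is exactly the normalisation `A^m = -1/m` together with `p m = -1`.
-/

namespace Real

theorem hasDerivAt_rpow_const_of_ne_zero {t : ℝ} (ht : t ≠ 0) (p : ℝ) :
    HasDerivAt (fun s : ℝ => s ^ p) (p * t ^ p / t) t := by
  simpa only [rpow_sub_one ht, mul_div_assoc] using hasDerivAt_rpow_const (p := p) (Or.inl ht)

theorem rpow_neg_one_div_natCast_pow {t : ℝ} (ht : 0 ≤ t) {m : ℕ} (hm : m ≠ 0) :
    (t ^ (-1 / (m : ℝ))) ^ m = t⁻¹ := by
  rw [neg_div, one_div, rpow_neg ht, inv_pow, rpow_inv_natCast_pow ht hm]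

theorem mul_rpow_neg_one_div_natCast_pow {A t : ℝ} (ht : 0 ≤ t) {m : ℕ}
    (hA : A ^ m = -(1 / (m : ℝ))) :
    (A * t ^ (-1 / (m : ℝ))) ^ m = -1 / (m : ℝ) / t := by
  have hm : m ≠ 0 := by
    -- for `m = 0`, `hA` reads `1 = -(1 / 0) = 0`
    rintro rfl
    norm_num at hA
  rw [mul_pow, hA, rpow_neg_one_div_natCast_pow ht hm]
  ring

end Real

theorem singular_solution_of_nonlinear_pde_general
    (m : ℕ) (A c : ℝ) (hA : A ^ m = -(1 / (m : ℝ)))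
    (t x : ℝ) (ht : 0 < t) :
    HasDerivAt (fun s : ℝ => A * (x + c) * s ^ (-1 / (m : ℝ)))
      ((A * (x + c) * t ^ (-1 / (m : ℝ))) *
        (deriv (fun y : ℝ => A * (y + c) * t ^ (-1 / (m : ℝ))) x) ^ m) t := by
  have hx : deriv (fun y : ℝ => A * (y + c) * t ^ (-1 / (m : ℝ))) x =
      A * t ^ (-1 / (m : ℝ)) := by
    simp
  rw [hx, Real.mul_rpow_neg_one_div_natCast_pow ht.le hA]
  exact ((Real.hasDerivAt_rpow_const_of_ne_zero ht.ne' _).const_mul (A * (x + c))).congr_deriv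
    (by ring)

/-- For odd `m`, `A^m = -1/m` and any `c`, the function
`u(t,x) = A·(x+c)·t^(-1/m)` satisfies `∂u/∂t = u·(∂u/∂x)^m` for all `t > 0`. -/
theorem singular_solution_of_nonlinear_pde
    (m : ℕ) (hm : Odd m) (A c : ℝ) (hA : A ^ m = -(1 / (m : ℝ)))
    (t x : ℝ) (ht : 0 < t) :
    HasDerivAt (fun s : ℝ => A * (x + c) * s ^ (-1 / (m : ℝ)))
      ((A * (x + c) * t ^ (-1 / (m : ℝ))) *
        (deriv (fun y : ℝ => A * (y + c) * t ^ (-1 / (m : ℝ))) x) ^ m) t :=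
  singular_solution_of_nonlinear_pde_general m A c hA t x ht
end

section
/- Let k be a field of characteristic zero and c ∈ k. Define the k-linear endomorphism L_c of the formal power series ring k[[z]] by L_c(g) = g − (z + c)·g′, where g′ is the formal derivative. Then: (1) the kernel of L_c is the one-dimensional subspace k·(z + c); (2) L_c is surjective if and only if c ≠ 0; in particular, when c = 0 the element z does not lie in the image of L_0. -/
/-!
In coefficients, `L_c g = g - (z + c) g'` reads
`coeff n (L_c g) = (1 - n) gₙ - c (n + 1) gₙ₊₁`.
For `c ≠ 0` this determines `gₙ₊₁` from `gₙ` and the target, so `L_c` is onto.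
For a kernel element it gives `g₀ = c g₁` and forces `gₙ = 0` for `n ≥ 2` (directly when `c = 0`,
by induction from `g₂ = 0` otherwise), so `g = g₁ (z + c)`.
For `c = 0` the factor `1 - n` vanishes at `n = 1`, so no `L_0 g` has a `z`-term.
-/

namespace PowerSeries

section CommRing

variable {R : Type*} [CommRing R]

noncomputable def clairautOp (c : R) (g : R⟦X⟧) : R⟦X⟧ :=
  g - (X + C c) * d⁄dX R g

theorem coeff_clairautOp (c : R) (g : R⟦X⟧) (n : ℕ) :
    coeff n (clairautOp c g) = (1 - n) * coeff n g - c * (n + 1) * coeff (n + 1) g := by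
  rw [clairautOp, map_sub, add_mul, map_add, coeff_C_mul, coeff_derivative]
  cases n with
  | zero => rw [coeff_zero_X_mul]; push_cast; ring
  | succ m => rw [coeff_succ_X_mul, coeff_derivative]; push_cast; ring

theorem clairautOp_smul (c a : R) (g : R⟦X⟧) :
    clairautOp c (a • g) = a • clairautOp c g := by
  rw [clairautOp, clairautOp, Derivation.map_smul, mul_smul_comm, smul_sub]

theorem clairautOp_X_add_C (c : R) : clairautOp c (X + C c) = 0 := by
  simp [clairautOp]

theorem coeff_one_clairautOp_zero (g : R⟦X⟧) : coeff 1 (clairautOp 0 g) = 0 := by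
  simp [coeff_clairautOp]

theorem clairautOp_zero_ne_X [Nontrivial R] (g : R⟦X⟧) : clairautOp 0 g ≠ X := fun h => by
  simpa [h] using coeff_one_clairautOp_zero g

end CommRing

section Domain

variable {R : Type*} [CommRing R] [IsDomain R] [CharZero R]

theorem coeff_eq_zero_of_clairautOp_eq_zero {c : R} {g : R⟦X⟧} (hg : clairautOp c g = 0)
    {n : ℕ} (hn : 2 ≤ n) : coeff n g = 0 := by
  have hrec (m : ℕ) : (1 - m : R) * coeff m g = c * (m + 1) * coeff (m + 1) g := by
    rw [← sub_eq_zero, ← coeff_clairautOp, hg, map_zero]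
  rcases eq_or_ne c 0 with rfl | hc
  · have hn' : (1 - n : R) ≠ 0 := by
      rw [sub_ne_zero]
      exact_mod_cast (by omega : 1 ≠ n)
    simpa [hn'] using hrec n
  · induction n, hn using Nat.le_induction with
    | base => simpa [hc, two_ne_zero] using (hrec 1).symm
    | succ m _ ih =>
      have := hrec m
      rw [ih, mul_zero, eq_comm] at this
      simpa [hc, Nat.cast_add_one_ne_zero] using this

theorem clairautOp_eq_zero_iff {c : R} {g : R⟦X⟧} :
    clairautOp c g = 0 ↔ ∃ a : R, g = a • (X + C c) := by
  refine ⟨fun hg => ⟨coeff 1 g, ?_⟩, ?_⟩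
  · ext n
    rcases n with _ | _ | n
    · have h0 := coeff_clairautOp c g 0
      rw [hg, map_zero, eq_comm, sub_eq_zero] at h0
      simpa [mul_comm] using h0
    · simp
    · simp [coeff_eq_zero_of_clairautOp_eq_zero hg (by omega : 2 ≤ n + 2), coeff_X]
  · rintro ⟨a, rfl⟩
    rw [clairautOp_smul, clairautOp_X_add_C, smul_zero]

end Domain

section Field

variable {k : Type*} [Field k] [CharZero k]

noncomputable def clairautPreimageCoeff (c : k) (h : k⟦X⟧) : ℕ → k
  | 0 => 0
  | n + 1 => ((1 - n) * clairautPreimageCoeff c h n - coeff n h) / (c * (n + 1))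

theorem clairautOp_mk_clairautPreimageCoeff {c : k} (hc : c ≠ 0) (h : k⟦X⟧) :
    clairautOp c (mk (clairautPreimageCoeff c h)) = h := by
  ext n
  have hne : c * ((n : k) + 1) ≠ 0 := mul_ne_zero hc (Nat.cast_add_one_ne_zero n)
  rw [coeff_clairautOp, coeff_mk, coeff_mk, clairautPreimageCoeff, mul_div_cancel₀ _ hne]
  ring

theorem clairautOp_surjective_iff {c : k} : Function.Surjective (clairautOp c) ↔ c ≠ 0 := by
  refine ⟨?_, fun hc h => ⟨_, clairautOp_mk_clairautPreimageCoeff hc h⟩⟩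
  rintro hsurj rfl
  obtain ⟨g, hg⟩ := hsurj X
  exact clairautOp_zero_ne_X g hg

end Field

end PowerSeries

open PowerSeries

/-- For `L_c(g) = g − (z+c)·g′` on `k[[z]]` (char 0):
(1) `ker L_c = k·(z+c)`; (2) `L_c` is surjective iff `c ≠ 0`; in particular for `c = 0`
the element `z` is not in the image of `L_0`. -/
theorem clairaut_linearization_kernel_and_surjectivity
    (k : Type*) [Field k] [CharZero k] (c : k) :
    (∀ g : PowerSeries k,
        g - (PowerSeries.X + PowerSeries.C c) * PowerSeries.derivative k g = 0 ↔
          ∃ a : k, g = a • (PowerSeries.X + PowerSeries.C c)) ∧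
    ((Function.Surjective fun g : PowerSeries k =>
        g - (PowerSeries.X + PowerSeries.C c) * PowerSeries.derivative k g) ↔ c ≠ 0) ∧
    (c = 0 → ∀ g : PowerSeries k,
        g - (PowerSeries.X + PowerSeries.C c) * PowerSeries.derivative k g
          ≠ PowerSeries.X) := by
  refine ⟨fun g => clairautOp_eq_zero_iff, clairautOp_surjective_iff, ?_⟩
  rintro rfl
  exact clairautOp_zero_ne_X
end
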